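/- If the coarse-level bounds are defined componentwise by (vlb^l)_k = (x_0^l)_k + max_{j ∈ J_k} (vlb^{l+1} - x^{l+1})_j and (vub^l)_k = (x_0^l)_k + min_{j ∈ J_k} (vub^{l+1} - x^{l+1})_j for nonempty index sets J_k, and the prolongation operator I has nonnegative entries with row sums equal to 1 where each row j of I has support only on columns k with j ∈ J_k, then for any coarse vector x^l with vlb^l ≤ x^l ≤ vub^l, the prolongated trial point satisfies vlb^{l+1} ≤ x^{l+1} + I(x^l - x_0^l) ≤ vub^{l+1}. -/
import Mathlib


open Matrix Finset

theorem stmt0 (n m : ℕ)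
    (x vl vu : Fin n → ℝ) (hlx : ∀ j, vl j ≤ x j) (hxu : ∀ j, x j ≤ vu j)
    (x0 : Fin m → ℝ) (J : Fin m → Finset (Fin n)) (hJ : ∀ k, (J k).Nonempty)
    (I : Matrix (Fin n) (Fin m) ℝ)
    (hI0 : ∀ j k, 0 ≤ I j k)
    (hsupp : ∀ j k, j ∉ J k → I j k = 0)
    (hrow : ∀ j, ∑ k, I j k = 1)
    (vlb vub : Fin m → ℝ)
    (hvlb : ∀ k, vlb k = x0 k + (J k).sup' (hJ k) (fun j => vl j - x j))
    (hvub : ∀ k, vub k = x0 k + (J k).inf' (hJ k) (fun j => vu j - x j))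
    (xc : Fin m → ℝ) (hfeas : ∀ k, vlb k ≤ xc k ∧ xc k ≤ vub k) :
    ∀ j, vl j ≤ x j + I.mulVec (xc - x0) j ∧ x j + I.mulVec (xc - x0) j ≤ vu j := by
  intro j
  have hmv : I.mulVec (xc - x0) j = ∑ k, I j k * (xc k - x0 k) := by
    simp [Matrix.mulVec, dotProduct]
  have hlo : ∀ k, I j k * (vl j - x j) ≤ I j k * (xc k - x0 k) := by
    intro k
    rcases eq_or_lt_of_le (hI0 j k) with h | h
    · simp [← h]
    · have hjJ : j ∈ J k := by
        by_contra hn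
        exact absurd (hsupp j k hn) (ne_of_gt h)
      apply mul_le_mul_of_nonneg_left _ (hI0 j k)
      have := (hfeas k).1
      rw [hvlb k] at this
      have h2 := Finset.le_sup' (fun j => vl j - x j) hjJ
      linarith
  have hhi : ∀ k, I j k * (xc k - x0 k) ≤ I j k * (vu j - x j) := by
    intro k
    rcases eq_or_lt_of_le (hI0 j k) with h | h
    · simp [← h]
    · have hjJ : j ∈ J k := by
        by_contra hn
        exact absurd (hsupp j k hn) (ne_of_gt h)
      apply mul_le_mul_of_nonneg_left _ (hI0 j k)
      have := (hfeas k).2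
      rw [hvub k] at this
      have h2 := Finset.inf'_le (fun j => vu j - x j) hjJ
      linarith
  have s1 : ∑ k, I j k * (vl j - x j) ≤ ∑ k, I j k * (xc k - x0 k) :=
    Finset.sum_le_sum fun k _ => hlo k
  have s2 : ∑ k, I j k * (xc k - x0 k) ≤ ∑ k, I j k * (vu j - x j) :=
    Finset.sum_le_sum fun k _ => hhi k
  rw [← Finset.sum_mul, hrow j, one_mul] at s1 s2
  constructor <;> rw [hmv] <;> linarith
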